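/- For all real $Z \le 0$, the standard normal cdf satisfies the lower bound $\Phi(Z) \ge \frac{2\phi(Z)}{\sqrt{4 + Z^2} - Z}$, where $\phi$ is the standard normal density. -/

import Mathlib

/-!
Write `r(y) = (√(4 + y²) + y) / 2` (Birnbaum's bound for the ratio `Φ/φ`). The true ratio `m = Φ/φ`
solves `m' = 1 + y m`, and `r` is a subsolution: `r² = y r + 1` and `r √(4 + y²) = 1 + r²` give
`r' = r / √(4 + y²) ≤ r² = 1 + y r`. Hence `Φ - φ r` has derivative `φ (1 + y r - r') ≥ 0`, so it is
nondecreasing; as `0 ≤ r ≤ 1` on `y ≤ 0`, it is bounded below by `-φ`, which tends to `0` at `-∞`.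
-/

open Real Set

/-- Standard normal pdf. -/
noncomputable def gaussPdf (x : ℝ) : ℝ := (Real.sqrt (2 * Real.pi))⁻¹ * Real.exp (-x ^ 2 / 2)

/-- Standard normal cdf. -/
noncomputable def gaussCdf (x : ℝ) : ℝ := ∫ t in Set.Iic x, gaussPdf t

open Filter Topology MeasureTheory

lemma gaussPdf_pos (x : ℝ) : 0 < gaussPdf x := by
  unfold gaussPdf
  positivity

lemma continuous_gaussPdf : Continuous gaussPdf := by
  unfold gaussPdf
  fun_prop

lemma integrable_gaussPdf : Integrable gaussPdf := by
  refine ((integrable_exp_neg_mul_sq (b := 1 / 2) (by norm_num)).const_mul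
    (√(2 * π))⁻¹).congr (ae_of_all _ fun x => ?_)
  simp only [gaussPdf]
  ring_nf

lemma gaussCdf_nonneg (x : ℝ) : 0 ≤ gaussCdf x :=
  setIntegral_nonneg measurableSet_Iic fun t _ => (gaussPdf_pos t).le

lemma hasDerivAt_gaussCdf (y : ℝ) : HasDerivAt gaussCdf (gaussPdf y) y := by
  have hsplit : ∀ x, gaussCdf x = gaussCdf 0 + ∫ t in (0 : ℝ)..x, gaussPdf t := fun x => by
    rw [← intervalIntegral.integral_Iic_sub_Iic integrable_gaussPdf.integrableOn
      integrable_gaussPdf.integrableOn, gaussCdf, gaussCdf]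
    ring
  rw [funext hsplit]
  exact (intervalIntegral.integral_hasDerivAt_right integrable_gaussPdf.intervalIntegrable
    (continuous_gaussPdf.stronglyMeasurableAtFilter _ _)
    continuous_gaussPdf.continuousAt).const_add _

lemma hasDerivAt_gaussPdf (y : ℝ) : HasDerivAt gaussPdf (-y * gaussPdf y) y := by
  have hexponent : HasDerivAt (fun x : ℝ => -x ^ 2 / 2) (-y) y := by
    exact ((hasDerivAt_pow 2 y).neg.div_const 2).congr_deriv (by ring)
  unfold gaussPdf
  exact (hexponent.exp.const_mul _).congr_deriv (by ring)

lemma tendsto_gaussPdf_atBot : Tendsto gaussPdf atBot (𝓝 0) := by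
  have hexponent : Tendsto (fun x : ℝ => -x ^ 2 / 2) atBot atBot := by
    have hsq : Tendsto (fun x : ℝ => x ^ 2) atBot atTop := by
      exact (tendsto_id.atBot_mul_atBot₀ tendsto_id).congr fun x => (sq x).symm
    exact (tendsto_neg_atTop_atBot.comp hsq).atBot_div_const (by norm_num)
  have := (tendsto_exp_atBot.comp hexponent).const_mul (√(2 * π))⁻¹
  rwa [mul_zero] at this

theorem monotone_gaussCdf_sub_gaussPdf_mul {r r' : ℝ → ℝ} (hr : ∀ y, HasDerivAt r (r' y) y)
    (hsub : ∀ y, r' y ≤ 1 + y * r y) : Monotone fun y => gaussCdf y - gaussPdf y * r y := by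
  have hderiv : ∀ y, HasDerivAt (fun y => gaussCdf y - gaussPdf y * r y)
      (gaussPdf y * (1 + y * r y - r' y)) y := fun y =>
    ((hasDerivAt_gaussCdf y).sub ((hasDerivAt_gaussPdf y).mul (hr y))).congr_deriv (by ring)
  refine monotone_of_deriv_nonneg (fun y => (hderiv y).differentiableAt) fun y => ?_
  rw [(hderiv y).deriv]
  exact mul_nonneg (gaussPdf_pos y).le (by linarith [hsub y])

theorem gaussPdf_mul_le_gaussCdf {r r' : ℝ → ℝ} (hr : ∀ y, HasDerivAt r (r' y) y)
    (hsub : ∀ y, r' y ≤ 1 + y * r y) (hlim : Tendsto (fun y => gaussPdf y * r y) atBot (𝓝 0))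
    (z : ℝ) : gaussPdf z * r z ≤ gaussCdf z := by
  have hmono := monotone_gaussCdf_sub_gaussPdf_mul hr hsub
  have hlower : Tendsto (fun y => -(gaussPdf y * r y)) atBot (𝓝 0) := by simpa using hlim.neg
  have hz : 0 ≤ gaussCdf z - gaussPdf z * r z := by
    refine le_of_tendsto hlower ?_
    filter_upwards [eventually_le_atBot z] with w hw
    linarith [gaussCdf_nonneg w, hmono hw]
  linarith

noncomputable def birnbaumRatio (y : ℝ) : ℝ := (√(4 + y ^ 2) + y) / 2

lemma sq_sqrt_four_add_sq (y : ℝ) : √(4 + y ^ 2) ^ 2 = 4 + y ^ 2 := sq_sqrt (by positivity)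

lemma abs_lt_sqrt_four_add_sq (y : ℝ) : |y| < √(4 + y ^ 2) := by
  rw [← sqrt_sq_eq_abs]
  exact sqrt_lt_sqrt (sq_nonneg y) (by linarith)

lemma sqrt_four_add_sq_pos (y : ℝ) : 0 < √(4 + y ^ 2) :=
  (abs_nonneg y).trans_lt (abs_lt_sqrt_four_add_sq y)

lemma birnbaumRatio_pos (y : ℝ) : 0 < birnbaumRatio y := by
  have := abs_lt_sqrt_four_add_sq y
  unfold birnbaumRatio
  linarith [neg_abs_le y]

lemma birnbaumRatio_le_one {y : ℝ} (hy : y ≤ 0) : birnbaumRatio y ≤ 1 := by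
  have hsqrt : √(4 + y ^ 2) ≤ 2 - y := by
    rw [sqrt_le_left (by linarith)]
    nlinarith
  unfold birnbaumRatio
  linarith

lemma birnbaumRatio_eq_div (y : ℝ) : birnbaumRatio y = 2 / (√(4 + y ^ 2) - y) := by
  have hpos : 0 < √(4 + y ^ 2) - y := by linarith [abs_lt_sqrt_four_add_sq y, le_abs_self y]
  rw [eq_div_iff hpos.ne', birnbaumRatio]
  linear_combination sq_sqrt_four_add_sq y / 2

lemma hasDerivAt_birnbaumRatio (y : ℝ) :
    HasDerivAt birnbaumRatio (birnbaumRatio y / √(4 + y ^ 2)) y := by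
  have hs := sqrt_four_add_sq_pos y
  have hsq : HasDerivAt (fun x : ℝ => 4 + x ^ 2) (2 * y) y := by
    simpa using (hasDerivAt_pow 2 y).const_add 4
  have hsqrt := hsq.sqrt (by positivity)
  refine ((hsqrt.add (hasDerivAt_id y)).div_const 2).congr_deriv ?_
  unfold birnbaumRatio
  field_simp
  ring

lemma birnbaumRatio_deriv_le (y : ℝ) :
    birnbaumRatio y / √(4 + y ^ 2) ≤ 1 + y * birnbaumRatio y := by
  set r := birnbaumRatio y
  have hs := sqrt_four_add_sq_pos y
  have hr : 0 < r := birnbaumRatio_pos y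
  have hquad : r ^ 2 = 1 + y * r := by
    simp only [r, birnbaumRatio]
    linear_combination sq_sqrt_four_add_sq y / 4
  have hprod : r * √(4 + y ^ 2) = 1 + r ^ 2 := by
    simp only [r, birnbaumRatio]
    linear_combination sq_sqrt_four_add_sq y / 4
  rw [div_le_iff₀ hs, ← hquad]
  calc r ≤ r * (1 + r ^ 2) := le_mul_of_one_le_right hr.le (le_add_of_nonneg_right (sq_nonneg r))
    _ = r ^ 2 * √(4 + y ^ 2) := by rw [← hprod]; ring

lemma tendsto_gaussPdf_mul_birnbaumRatio_atBot :
    Tendsto (fun y => gaussPdf y * birnbaumRatio y) atBot (𝓝 0) := by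
  refine tendsto_of_tendsto_of_tendsto_of_le_of_le' tendsto_const_nhds tendsto_gaussPdf_atBot
    (Eventually.of_forall fun y => (mul_pos (gaussPdf_pos y) (birnbaumRatio_pos y)).le) ?_
  filter_upwards [eventually_le_atBot 0] with y hy
  exact mul_le_of_le_one_right (gaussPdf_pos y).le (birnbaumRatio_le_one hy)

theorem mills_lower_bound_general (Z : ℝ) :
    gaussCdf Z ≥ 2 * gaussPdf Z / (Real.sqrt (4 + Z ^ 2) - Z) := by
  rw [ge_iff_le, mul_div_right_comm, ← birnbaumRatio_eq_div, mul_comm]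
  exact gaussPdf_mul_le_gaussCdf hasDerivAt_birnbaumRatio birnbaumRatio_deriv_le
    tendsto_gaussPdf_mul_birnbaumRatio_atBot Z

theorem mills_lower_bound (Z : ℝ) (hZ : Z ≤ 0) :
    gaussCdf Z ≥ 2 * gaussPdf Z / (Real.sqrt (4 + Z ^ 2) - Z) :=
  mills_lower_bound_general Z
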